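/- Let (λ, f) be an eigenpair of ℋ_p, let A₁,…,A_m be the nodal domains of f, and for each i let f|_{A_i} : V → ℝ be the function equal to f on A_i and 0 elsewhere. Then ℛ(g) ≤ λ for every nonzero g in the linear span of {f|_{A₁},…,f|_{A_m}}. -/

import Mathlib

noncomputable section

open Finset

/-- `φ_p(x) = |x|^{p-2} x` (real exponent, `φ_p(0) = 0`). -/
def phiP (p x : ℝ) : ℝ := |x| ^ (p - 2) * x

/-- The generalized `p`-Laplacian `ℋ_p`.  The edge-weight function `ω` is assumed to be
symmetric and to vanish on pairs of non-adjacent vertices, so the sum over all vertices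
is the sum over the neighbours of `u`. -/
def genLap {V : Type*} [Fintype V] (ω : V → V → ℝ) (κ : V → ℝ) (p : ℝ)
    (f : V → ℝ) (u : V) : ℝ :=
  (∑ v : V, ω u v * phiP p (f u - f v)) + κ u * phiP p (f u)

/-- `(lam, f)` is an eigenpair of `ℋ_p`. -/
def IsEigenpair {V : Type*} [Fintype V] (ω : V → V → ℝ) (κ ϱ : V → ℝ) (p lam : ℝ)
    (f : V → ℝ) : Prop :=
  f ≠ 0 ∧ ∀ u, genLap ω κ p f u = lam * (ϱ u * phiP p (f u))

/-- The Rayleigh quotient `ℛ` of `ℋ_p` (each edge `uv` is counted once: the double sum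
counts it twice, whence the factor `1/2`). -/
def rayleigh {V : Type*} [Fintype V] (ω : V → V → ℝ) (κ ϱ : V → ℝ) (p : ℝ)
    (f : V → ℝ) : ℝ :=
  ((1 / 2) * ∑ u : V, ∑ v : V, ω u v * |f u - f v| ^ p + ∑ u : V, κ u * |f u| ^ p) /
    ∑ u : V, ϱ u * |f u| ^ p

/-- The `p`-sphere `𝒮_p`. -/
def pSphere (V : Type*) [Fintype V] (p : ℝ) : Set (V → ℝ) := {f | ∑ u : V, |f u| ^ p = 1}

/-- The Krasnoselskii genus of a (symmetric) subset of `ℝ^V`. -/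
def krasGenus {V : Type*} [Fintype V] (A : Set (V → ℝ)) : ℕ∞ :=
  sInf {n : ℕ∞ | ∃ k : ℕ, n = (k : ℕ∞) ∧ ∃ φ : (V → ℝ) → (Fin k → ℝ),
    ContinuousOn φ A ∧ (∀ x ∈ A, φ (-x) = -φ x) ∧ ∀ x ∈ A, φ x ≠ 0}

/-- The `k`-th variational eigenvalue of `ℋ_p`: the min over closed symmetric subsets of the
`p`-sphere of genus at least `k` of the max of the Rayleigh quotient. -/
def varEig {V : Type*} [Fintype V] (ω : V → V → ℝ) (κ ϱ : V → ℝ) (p : ℝ) (k : ℕ) : ℝ :=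
  sInf {r : ℝ | ∃ A : Set (V → ℝ), A ⊆ pSphere V p ∧ IsClosed A ∧ (∀ f ∈ A, -f ∈ A) ∧
    (k : ℕ∞) ≤ krasGenus A ∧ IsGreatest (rayleigh ω κ ϱ p '' A) r}

/-- The subgraph `𝒢₊(f)`: vertices where `f ≠ 0`, edges where `f` has equal nonzero signs. -/
def posGraph {V : Type*} (G : SimpleGraph V) (f : V → ℝ) : SimpleGraph V where
  Adj u v := G.Adj u v ∧ 0 < f u * f v
  symm := by
    constructor
    intro u v h
    exact ⟨h.1.symm, by rw [mul_comm]; exact h.2⟩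
  loopless := ⟨fun u h => G.loopless.irrefl u h.1⟩

/-- The number `ν(f)` of (strong) nodal domains of `f`: the number of connected components of
`𝒢₊(f)` consisting of vertices where `f` is nonzero. -/
def nodalCount {V : Type*} (G : SimpleGraph V) (f : V → ℝ) : ℕ :=
  {c : (posGraph G f).ConnectedComponent |
    ∀ u, (posGraph G f).connectedComponentMk u = c → f u ≠ 0}.ncard

/-- The subgraph of edges on which `f` changes sign. -/
def negGraph {V : Type*} (G : SimpleGraph V) (f : V → ℝ) : SimpleGraph V where
  Adj u v := G.Adj u v ∧ f u * f v < 0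
  symm := by
    constructor
    intro u v h
    exact ⟨h.1.symm, by rw [mul_comm]; exact h.2⟩
  loopless := ⟨fun u h => G.loopless.irrefl u h.1⟩

/-- `ζ(f)`: the number of edges on which `f` changes sign. -/
def zetaCount {V : Type*} [Fintype V] (G : SimpleGraph V) (f : V → ℝ) : ℕ :=
  (negGraph G f).edgeSet.ncard

/-- `z(f)`: the number of vertices where `f` vanishes. -/
def zeroCount {V : Type*} [Fintype V] (f : V → ℝ) : ℕ := {u : V | f u = 0}.ncard

/-- `l(f)`: the number of independent loops (cycle rank) of `𝒢₊(f)`,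
`|E(𝒢₊(f))| − |V(𝒢₊(f))| + ν(f)`. -/
def loopCount {V : Type*} [Fintype V] (G : SimpleGraph V) (f : V → ℝ) : ℤ :=
  ((posGraph G f).edgeSet.ncard : ℤ) - ({u : V | f u ≠ 0}.ncard : ℤ) + (nodalCount G f : ℤ)

/-- The subgraph `𝒢'(f)` of `𝒢` induced on the support of `f` (vertices with `f = 0` are
deleted together with all incident edges; in this encoding they are kept as isolated
vertices, which are discarded in the counts below). -/
def suppGraph {V : Type*} (G : SimpleGraph V) (f : V → ℝ) : SimpleGraph V where
  Adj u v := G.Adj u v ∧ f u ≠ 0 ∧ f v ≠ 0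
  symm := by
    constructor
    intro u v h
    exact ⟨h.1.symm, h.2.2, h.2.1⟩
  loopless := ⟨fun u h => G.loopless.irrefl u h.1⟩

/-- `c(f)`: the number of connected components of `𝒢'(f)`. -/
def compCount {V : Type*} (G : SimpleGraph V) (f : V → ℝ) : ℕ :=
  {c : (suppGraph G f).ConnectedComponent |
    ∀ u, (suppGraph G f).connectedComponentMk u = c → f u ≠ 0}.ncard

/-- `β'(f)`: the number of independent loops of `𝒢'(f)`,
`|E(𝒢'(f))| − |V(𝒢'(f))| + c(f)`. -/
def betaSupp {V : Type*} [Fintype V] (G : SimpleGraph V) (f : V → ℝ) : ℤ :=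
  ((suppGraph G f).edgeSet.ncard : ℤ) - ({u : V | f u ≠ 0}.ncard : ℤ) + (compCount G f : ℤ)

/-! Write `g = A * f` with `A` constant on each nodal domain of `f`. Testing the eigenvalue
equation against `|A|^p f` gives `λ ∑ ϱ_u |g_u|^p = ∑_u |A_u|^p f_u (ℋ_p f)(u)`. Edge by edge,
`|g_u - g_v|^p ≤ |A_u|^p φ_p(f_u - f_v) f_u + |A_v|^p φ_p(f_v - f_u) f_v`: with equality inside a
nodal domain, and by convexity of `t ↦ t^p` across a sign change of `f`, where
`φ_p(f_u - f_v) f_u = (|f_u| + |f_v|)^(p-1) |f_u|`. Summing over the edges bounds the numerator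
of `ℛ(g)` by `λ` times its denominator. -/

section PhiP

variable {p : ℝ}

lemma phiP_neg (p x : ℝ) : phiP p (-x) = -phiP p x := by
  unfold phiP; rw [abs_neg]; ring

lemma phiP_mul_self (hp : p ≠ 0) (x : ℝ) : phiP p x * x = |x| ^ p := by
  rcases eq_or_ne x 0 with rfl | hx
  · simp [phiP, Real.zero_rpow hp]
  · have hx' : 0 < |x| := abs_pos.2 hx
    calc phiP p x * x = |x| ^ (p - 2) * |x| ^ (2 : ℕ) := by rw [phiP, sq_abs]; ring
      _ = |x| ^ p := by rw [← Real.rpow_natCast, ← Real.rpow_add hx']; norm_num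

lemma phiP_sub_mul_of_mul_nonpos (hp : p ≠ 1) {a b : ℝ} (hab : a * b ≤ 0) :
    phiP p (a - b) * a = (|a| + |b|) ^ (p - 1) * |a| := by
  have habs : |a - b| = |a| + |b| ∧ (a - b) * a = (|a| + |b|) * |a| := by
    rcases mul_nonpos_iff.1 hab with ⟨ha, hb⟩ | ⟨ha, hb⟩
    · rw [abs_of_nonneg ha, abs_of_nonpos hb, abs_of_nonneg (by linarith)]
      constructor <;> ring
    · rw [abs_of_nonpos ha, abs_of_nonneg hb, abs_of_nonpos (by linarith)]
      constructor <;> ring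
  rw [phiP, mul_assoc, habs.2, habs.1, ← mul_assoc,
    ← Real.rpow_add_one' (by positivity) (by contrapose! hp; linarith)]
  ring_nf

lemma add_mul_rpow_le (hp : 1 ≤ p) {s t x y : ℝ} (hs : 0 ≤ s) (ht : 0 ≤ t) (hx : 0 ≤ x)
    (hy : 0 ≤ y) : (s * x + t * y) ^ p ≤ (s + t) ^ (p - 1) * (s * x ^ p + t * y ^ p) := by
  have hp0 : p ≠ 0 := by linarith
  have holder := Real.inner_le_weight_mul_Lp_of_nonneg univ hp ![s, t] ![x, y]
    (by intro i; fin_cases i <;> simpa) (by intro i; fin_cases i <;> simpa)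
  simp only [Fin.sum_univ_two, Matrix.cons_val_zero, Matrix.cons_val_one] at holder
  calc (s * x + t * y) ^ p
      ≤ ((s + t) ^ (1 - p⁻¹) * (s * x ^ p + t * y ^ p) ^ p⁻¹) ^ p :=
        Real.rpow_le_rpow (by positivity) holder (by linarith)
    _ = (s + t) ^ (p - 1) * (s * x ^ p + t * y ^ p) := by
        rw [Real.mul_rpow (by positivity) (by positivity), ← Real.rpow_mul (by positivity),
          Real.rpow_inv_rpow (by positivity) hp0]
        congr 2
        field_simp

lemma abs_mul_sub_mul_rpow_le_of_mul_nonpos (hp : 1 < p) {a b : ℝ} (hab : a * b ≤ 0)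
    (α β : ℝ) :
    |α * a - β * b| ^ p ≤ |α| ^ p * (phiP p (a - b) * a) + |β| ^ p * (phiP p (b - a) * b) := by
  have hba : b * a ≤ 0 := by rwa [mul_comm]
  have htri : |α * a - β * b| ≤ |a| * |α| + |b| * |β| := by
    simpa only [abs_mul, mul_comm] using abs_sub (α * a) (β * b)
  rw [phiP_sub_mul_of_mul_nonpos hp.ne' hab, phiP_sub_mul_of_mul_nonpos hp.ne' hba,
    add_comm |b|]
  calc |α * a - β * b| ^ p ≤ (|a| * |α| + |b| * |β|) ^ p :=
        Real.rpow_le_rpow (abs_nonneg _) htri (by linarith)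
    _ ≤ (|a| + |b|) ^ (p - 1) * (|a| * |α| ^ p + |b| * |β| ^ p) :=
        add_mul_rpow_le hp.le (abs_nonneg _) (abs_nonneg _) (abs_nonneg _) (abs_nonneg _)
    _ = _ := by ring

lemma abs_mul_sub_mul_rpow_le (hp : 1 < p) {a b α β : ℝ} (h : 0 < a * b → α = β) :
    |α * a - β * b| ^ p ≤ |α| ^ p * (phiP p (a - b) * a) + |β| ^ p * (phiP p (b - a) * b) := by
  rcases lt_or_ge 0 (a * b) with hab | hab
  · obtain rfl := h hab
    have hsym : phiP p (b - a) = -phiP p (a - b) := by rw [← phiP_neg, neg_sub]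
    rw [← mul_sub, abs_mul, Real.mul_rpow (abs_nonneg _) (abs_nonneg _),
      ← phiP_mul_self (by linarith) (a - b), hsym]
    exact le_of_eq (by ring)
  · exact abs_mul_sub_mul_rpow_le_of_mul_nonpos hp hab α β

end PhiP

section Rayleigh

variable {V : Type*} [Fintype V] {ω : V → V → ℝ} {κ ϱ : V → ℝ} {p : ℝ}

lemma sum_mul_abs_rpow_pos (hϱ : ∀ u, 0 < ϱ u) {g : V → ℝ} (hg : g ≠ 0) (p : ℝ) :
    0 < ∑ u, ϱ u * |g u| ^ p := by
  obtain ⟨u, hu⟩ := Function.ne_iff.1 hg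
  exact sum_pos' (fun v _ => mul_nonneg (hϱ v).le (by positivity))
    ⟨u, mem_univ u, mul_pos (hϱ u) (Real.rpow_pos_of_pos (abs_pos.2 hu) p)⟩

lemma sum_sum_mul_abs_sub_rpow_le (hp : 1 < p) (hωsymm : ∀ u v, ω u v = ω v u)
    (hω : ∀ u v, 0 ≤ ω u v) {A f : V → ℝ}
    (hA : ∀ u v, ω u v ≠ 0 → 0 < f u * f v → A u = A v) :
    ∑ u, ∑ v, ω u v * |(A * f) u - (A * f) v| ^ p ≤
      2 * ∑ u, ∑ v, |A u| ^ p * (ω u v * (phiP p (f u - f v) * f u)) := by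
  set E : V → V → ℝ := fun u v => |A u| ^ p * (ω u v * (phiP p (f u - f v) * f u))
  have hpair : ∀ u v, ω u v * |(A * f) u - (A * f) v| ^ p ≤ E u v + E v u := by
    intro u v
    rcases eq_or_ne (ω u v) 0 with h0 | h0
    · simp [E, h0, hωsymm v u]
    · calc ω u v * |(A * f) u - (A * f) v| ^ p
          ≤ ω u v * (|A u| ^ p * (phiP p (f u - f v) * f u) +
            |A v| ^ p * (phiP p (f v - f u) * f v)) :=
            mul_le_mul_of_nonneg_left (abs_mul_sub_mul_rpow_le hp (hA u v h0)) (hω u v)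
        _ = E u v + E v u := by simp only [E, hωsymm v u]; ring
  calc ∑ u, ∑ v, ω u v * |(A * f) u - (A * f) v| ^ p
      ≤ ∑ u, ∑ v, (E u v + E v u) := sum_le_sum fun u _ => sum_le_sum fun v _ => hpair u v
    _ = 2 * ∑ u, ∑ v, E u v := by
        simp only [sum_add_distrib]
        rw [sum_comm (f := fun u v => E v u)]
        ring

lemma sum_sum_add_sum_eq_of_genLap_eq (hp : p ≠ 0) {lam : ℝ} {f : V → ℝ}
    (heq : ∀ u, genLap ω κ p f u = lam * (ϱ u * phiP p (f u))) (A : V → ℝ) :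
    ∑ u, ∑ v, |A u| ^ p * (ω u v * (phiP p (f u - f v) * f u)) +
        ∑ u, κ u * |(A * f) u| ^ p = lam * ∑ u, ϱ u * |(A * f) u| ^ p := by
  have hpow : ∀ u, |(A * f) u| ^ p = |A u| ^ p * (phiP p (f u) * f u) := fun u => by
    rw [Pi.mul_apply, abs_mul, Real.mul_rpow (abs_nonneg _) (abs_nonneg _),
      phiP_mul_self hp]
  have hvertex : ∀ u, ∑ v, |A u| ^ p * (ω u v * (phiP p (f u - f v) * f u)) +
      κ u * |(A * f) u| ^ p = lam * (ϱ u * |(A * f) u| ^ p) := fun u => by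
    calc _ = |A u| ^ p * (genLap ω κ p f u * f u) := by
          simp only [genLap, hpow, mul_sum, sum_mul, add_mul, mul_add]
          congr 1
          · exact sum_congr rfl fun v _ => by ring
          · ring
      _ = lam * (ϱ u * |(A * f) u| ^ p) := by rw [heq u, hpow]; ring
  rw [← sum_add_distrib, sum_congr rfl fun u _ => hvertex u, mul_sum]

theorem rayleigh_mul_le_of_genLap_eq (hp : 1 < p) (hωsymm : ∀ u v, ω u v = ω v u)
    (hω : ∀ u v, 0 ≤ ω u v) (hϱ : ∀ u, 0 < ϱ u) {lam : ℝ} {f : V → ℝ}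
    (heq : ∀ u, genLap ω κ p f u = lam * (ϱ u * phiP p (f u))) {A : V → ℝ}
    (hA : ∀ u v, ω u v ≠ 0 → 0 < f u * f v → A u = A v) (hAf : A * f ≠ 0) :
    rayleigh ω κ ϱ p (A * f) ≤ lam := by
  rw [rayleigh, div_le_iff₀ (sum_mul_abs_rpow_pos hϱ hAf p)]
  have henergy := sum_sum_mul_abs_sub_rpow_le hp hωsymm hω hA
  have hidentity := sum_sum_add_sum_eq_of_genLap_eq (by linarith) heq A
  linarith

end Rayleigh

lemma exists_eq_mul_of_mem_span_indicator {V : Type*} {H : SimpleGraph V} {f : V → ℝ}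
    {S : Set (V → ℝ)} {g : V → ℝ} (hg : g ∈ Submodule.span ℝ S)
    (hS : ∀ h ∈ S, ∃ c : H.ConnectedComponent, h = {u | H.connectedComponentMk u = c}.indicator f) :
    ∃ A : V → ℝ, (∀ u v, H.Adj u v → A u = A v) ∧ g = A * f := by
  classical
  induction hg using Submodule.span_induction with
  | mem h hh =>
    obtain ⟨c, rfl⟩ := hS h hh
    refine ⟨{u | H.connectedComponentMk u = c}.indicator 1, fun u v huv => ?_, ?_⟩
    · simp [Set.indicator_apply, SimpleGraph.ConnectedComponent.sound huv.reachable]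
    · ext u
      simp [Set.indicator_apply]
  | zero => exact ⟨0, fun _ _ _ => rfl, by simp⟩
  | add x y _ _ hx hy =>
    obtain ⟨A, hA, rfl⟩ := hx
    obtain ⟨B, hB, rfl⟩ := hy
    exact ⟨A + B, fun u v huv => by simp [hA u v huv, hB u v huv], by ring⟩
  | smul a x _ hx =>
    obtain ⟨A, hA, rfl⟩ := hx
    exact ⟨a • A, fun u v huv => by simp [hA u v huv], by rw [smul_mul_assoc]⟩

/-- the Rayleigh quotient is bounded by `λ` on the span of the restrictions of
an eigenfunction `f` of `λ` to its nodal domains. -/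
theorem stmt7 {V : Type*} [Fintype V]
    (G : SimpleGraph V) (ω : V → V → ℝ) (κ ϱ : V → ℝ) (p : ℝ) (hp : 1 < p)
    (hωsymm : ∀ u v, ω u v = ω v u)
    (hωpos : ∀ u v, G.Adj u v → 0 < ω u v)
    (hωzero : ∀ u v, ¬ G.Adj u v → ω u v = 0)
    (hϱpos : ∀ u, 0 < ϱ u)
    (lam : ℝ) (f : V → ℝ) (heig : IsEigenpair ω κ ϱ p lam f) :
    ∀ g : V → ℝ, g ≠ 0 →
      g ∈ Submodule.span ℝ {h : V → ℝ | ∃ c : (posGraph G f).ConnectedComponent,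
        (∀ u, (posGraph G f).connectedComponentMk u = c → f u ≠ 0) ∧
        h = Set.indicator {u : V | (posGraph G f).connectedComponentMk u = c} f} →
      rayleigh ω κ ϱ p g ≤ lam := by
  intro g hg hspan
  obtain ⟨A, hA, rfl⟩ :=
    exists_eq_mul_of_mem_span_indicator hspan fun _ ⟨c, _, hc⟩ => ⟨c, hc⟩
  have hω : ∀ u v, 0 ≤ ω u v := fun u v => by
    by_cases huv : G.Adj u v
    · exact (hωpos u v huv).le
    · exact (hωzero u v huv).ge
  have hadj : ∀ u v, ω u v ≠ 0 → G.Adj u v := fun u v h => by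
    by_contra huv
    exact h (hωzero u v huv)
  exact rayleigh_mul_le_of_genLap_eq hp hωsymm hω hϱpos heig.2
    (fun u v huv hf => hA u v ⟨hadj u v huv, hf⟩) hg
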